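/- arXiv:1012.1066 — 2 statements merged into one kernel-verified Lean document; each statement's English description precedes it below -/
import Mathlib

section
/- Let (W,S) be a Coxeter system with length l, Bruhat order ≤, and s ∈ S. Suppose x, y, v, w ∈ W satisfy: (1) xy = vw with l(xy) = l(x) + l(y) = l(v) + l(w); (2) w < sw and v < vs; (3) y ≤ sw. Then y ≤ w. -/
open LaurentPolynomial Polynomial

noncomputable section

namespace WGI

/-- The ring `A = ℤ[q,q⁻¹]` of Laurent polynomials. -/
abbrev A : Type := LaurentPolynomial ℤ

/-- The indeterminate `q`. -/
def Q : A := LaurentPolynomial.T 1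

/-- The element `q⁻¹`. -/
def Qi : A := LaurentPolynomial.T (-1)

variable {B W : Type} [Group W] {M : CoxeterMatrix B} (cs : CoxeterSystem M W)

/-- One step of the relation generating the Bruhat order: `w = tu` for a reflection `t`
(or `t = 1`) and `l(u) ≤ l(w)`. -/
def BStep (u w : W) : Prop :=
  cs.length u ≤ cs.length w ∧ ∃ t : W, (cs.IsReflection t ∨ t = 1) ∧ w = t * u

/-- The Bruhat order on `W`: the transitive (and reflexive) closure of `BStep`. -/
def BrLe (u w : W) : Prop := Relation.ReflTransGen (BStep cs) u w

/-- Strict Bruhat order. -/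
def BrLt (u w : W) : Prop := BrLe cs u w ∧ u ≠ w

/-- The left weak order: `u ≤_L w` iff `l(wu⁻¹) = l(w) - l(u)`, i.e. `u` is a suffix of `w`. -/
def WkLe (u w : W) : Prop := cs.length (w * u⁻¹) + cs.length u = cs.length w

/-- Strict left weak order. -/
def WkLt (u w : W) : Prop := WkLe cs u w ∧ u ≠ w

/-- An ideal of `(W, ≤_L)`: a subset closed under taking suffixes. -/
def IsIdealWk (I : Set W) : Prop := ∀ u w : W, WkLe cs u w → w ∈ I → u ∈ I

/-- The set `D_J` of minimal left coset representatives of `W_J`. -/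
def DD (J : Set B) : Set W := { w | ∀ j ∈ J, cs.length w < cs.length (w * cs.simple j) }

/-- Strong ascent: `sw > w` and `sw ∈ I`. -/
def SA (I : Set W) (s : B) (w : W) : Prop :=
  cs.length w < cs.length (cs.simple s * w) ∧ cs.simple s * w ∈ I

/-- Strong descent: `sw < w`. -/
def SD (s : B) (w : W) : Prop := cs.length (cs.simple s * w) < cs.length w

/-- Weak ascent: `sw > w` and `sw ∈ D_J \ I`. -/
def WA (I : Set W) (J : Set B) (s : B) (w : W) : Prop :=
  cs.length w < cs.length (cs.simple s * w) ∧ cs.simple s * w ∈ DD cs J \ I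

/-- Weak descent: `sw > w` and `sw ∉ D_J`. -/
def WD (J : Set B) (s : B) (w : W) : Prop :=
  cs.length w < cs.length (cs.simple s * w) ∧ cs.simple s * w ∉ DD cs J

/-- Descents: strong or weak. -/
def Desc (J : Set B) (s : B) (w : W) : Prop := SD cs s w ∨ WD cs J s w

/-- Ascents: strong or weak. -/
def Asc (I : Set W) (J : Set B) (s : B) (w : W) : Prop := SA cs I s w ∨ WA cs I J s w

/-- The data making the ideal `I` (of the left weak order, contained in `D_J`) a
`W`-graph ideal with respect to `J`: an `H(W)`-module (a module together with operators
`T s` satisfying the quadratic and braid relations of the Hecke algebra) which is free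
over `A` with basis indexed by `I`, on which the generators act by the four-case formula
of Definition 5.2, together with a compatible semilinear bar involution fixing `b₁`. -/
structure WGModule (I : Set W) (J : Set B) where
  V : Type
  [acg : AddCommGroup V]
  [mod : Module A V]
  ideal : IsIdealWk cs I
  subset : I ⊆ DD cs J
  one_mem : (1 : W) ∈ I
  bas : Module.Basis I A V
  T : B → V →ₗ[A] V
  quad : ∀ s : B, (T s) ∘ₗ (T s) = LinearMap.id + (Q - Qi) • T s
  braid : ∀ s t : B,
    ((CoxeterSystem.alternatingWord s t (M s t)).map fun i => (T i : Module.End A V)).prod =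
    ((CoxeterSystem.alternatingWord t s (M s t)).map fun i => (T i : Module.End A V)).prod
  /-- the polynomials `r^s_{y,w}` (divided by `q`, as elements of `ℤ[q]` with zero constant
  term they are recorded in `qℤ[q]` via `r_const`); `r s w y` is `r^s_{y,w}`. -/
  r : B → I → (I →₀ Polynomial ℤ)
  r_const : ∀ (s : B) (w y : I), ((r s w) y).coeff 0 = 0
  r_supp : ∀ (s : B) (w y : I), (r s w) y ≠ 0 → BrLt cs (y : W) (cs.simple s * (w : W))
  act_SA : ∀ (s : B) (w : I) (h : SA cs I s (w : W)),
    T s (bas w) = bas ⟨cs.simple s * (w : W), h.2⟩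
  act_SD : ∀ (s : B) (w : I), SD cs s (w : W) → ∀ h' : cs.simple s * (w : W) ∈ I,
    T s (bas w) = bas ⟨cs.simple s * (w : W), h'⟩ + (Q - Qi) • bas w
  act_WD : ∀ (s : B) (w : I), WD cs J s (w : W) → T s (bas w) = -Qi • bas w
  act_WA : ∀ (s : B) (w : I), WA cs I J s (w : W) →
    T s (bas w) = Q • bas w - (r s w).sum fun y p => (Polynomial.toLaurent p) • bas y
  bar : V → V
  bar_add : ∀ x y : V, bar (x + y) = bar x + bar y
  bar_smul : ∀ (a : A) (x : V), bar (a • x) = (LaurentPolynomial.invert a) • bar x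
  bar_one : bar (bas ⟨(1 : W), one_mem⟩) = bas ⟨(1 : W), one_mem⟩
  bar_T : ∀ (s : B) (x : V), bar (T s x) = T s (bar x) - (Q - Qi) • bar x

attribute [instance] WGModule.acg WGModule.mod

/-- `I` is a `W`-graph ideal with respect to `J`. -/
def IsWGraphIdeal (I : Set W) (J : Set B) : Prop := Nonempty (WGModule cs I J)


open scoped Classical

/-!
Induction on `ℓ(w)`. For `w = 1`, `y ≤ s` forces `y ∈ {1, s}`, and `y = s` is impossible: then
`x = vs` would be longer than `v` (as `v < vs`) and shorter (as `ℓ(x) + 1 = ℓ(v)`). Otherwise pick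
a right descent `i` of `w`; as `w < sw`, it is also one of `sw`. If `i` is a descent of `y`, lifting
gives `y sᵢ ≤ s w sᵢ`, induction on `(x, y sᵢ, v, w sᵢ)` gives `y sᵢ ≤ w sᵢ`, hence `y ≤ w`. If not,
lifting gives `y ≤ s w sᵢ`, and the exchange condition applied to the descent `i` of the reduced
product `x y` must delete a letter of `x`, since deleting one of `y` would make `i` a descent of
`y`. This yields `x'` with `x' y = v (w sᵢ)`, and induction gives `y ≤ w sᵢ < w`.

The lifting properties are proved along Bruhat chains from the strong exchange condition, which
comes from the action of `W` on `W × {±1}` in which `sᵢ` conjugates the first entry and flips the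
sign exactly at `sᵢ`.
-/

section StrongExchange

variable {B W : Type*} [Group W] {M : CoxeterMatrix B} (cs : CoxeterSystem M W)

open CoxeterSystem

local prefix:100 "s " => cs.simple
local prefix:100 "π " => cs.wordProd
local prefix:100 "ℓ " => cs.length
local prefix:100 "lis " => cs.leftInvSeq

theorem _root_.CoxeterSystem.leftInvSeq_append (ω ω' : List B) :
    lis (ω ++ ω') = lis ω ++ (lis ω').map (MulAut.conj (π ω)) := by
  induction ω with
  | nil => simp
  | cons i ω ih => simp [leftInvSeq, ih, cs.wordProd_cons, Function.comp_def]

theorem _root_.CoxeterSystem.conj_simple_conj_simple (i : B) (x : W) :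
    MulAut.conj (s i) (MulAut.conj (s i) x) = x := by
  simp [mul_assoc, ← mul_assoc (s i) (s i)]

theorem _root_.CoxeterSystem.conj_simple_eq_simple_iff (i : B) (x : W) :
    MulAut.conj (s i) x = s i ↔ x = s i := by
  constructor
  · intro h
    rw [← cs.conj_simple_conj_simple i x, h]
    simp
  · rintro rfl
    simp

def _root_.CoxeterSystem.signPerm (i : B) : Equiv.Perm (W × ℤˣ) :=
  Function.Involutive.toPerm
    (fun p => (MulAut.conj (s i) p.1, if p.1 = s i then -p.2 else p.2)) <| by
    rintro ⟨x, ε⟩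
    simp only [cs.conj_simple_conj_simple, cs.conj_simple_eq_simple_iff]
    split_ifs <;> simp

theorem _root_.CoxeterSystem.signPerm_apply (i : B) (x : W) (ε : ℤˣ) :
    cs.signPerm i (x, ε) = (MulAut.conj (s i) x, if x = s i then -ε else ε) := rfl

theorem _root_.CoxeterSystem.prod_map_signPerm_apply (ω : List B) (x : W) (ε : ℤˣ) :
    (ω.map cs.signPerm).prod (x, ε) =
      (MulAut.conj (π ω) x, ε * (-1) ^ (lis ω).count (MulAut.conj (π ω) x)) := by
  induction ω with
  | nil => simp
  | cons i ω ih =>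
    rw [List.map_cons, List.prod_cons, Equiv.Perm.mul_apply, ih, cs.signPerm_apply,
      cs.wordProd_cons, map_mul, MulAut.mul_apply, leftInvSeq, List.count_cons,
      List.count_map_of_injective _ _ (MulAut.conj (s i)).injective]
    simp only [beq_iff_eq, eq_comm (a := s i), cs.conj_simple_eq_simple_iff]
    split_ifs <;> simp [pow_succ]

theorem _root_.CoxeterSystem.prod_map_alternatingWord_two_mul {G : Type*} [Monoid G] (f : B → G)
    (i j : B) (m : ℕ) :
    ((alternatingWord i j (2 * m)).map f).prod = (f i * f j) ^ m := by
  induction m with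
  | zero => simp [alternatingWord]
  | succ m ih =>
    rw [Nat.mul_succ, alternatingWord_succ', alternatingWord_succ']
    simp [ih, pow_succ', mul_assoc]

theorem _root_.CoxeterSystem.leftInvSeq_alternatingWord_two_mul (i j : B) (p : ℕ) :
    lis (alternatingWord i j (2 * p)) =
      (List.range (2 * p)).map fun k => s i * (s j * s i) ^ k := by
  refine List.ext_getElem (by simp) fun k hk _ => ?_
  rw [cs.getElem_leftInvSeq_alternatingWord i j p k (by simpa using hk),
    cs.prod_alternatingWord_eq_mul_pow]
  simp [Nat.mul_add_div]

theorem _root_.CoxeterSystem.even_count_leftInvSeq_alternatingWord_two_mul (i j : B) (x : W) :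
    Even ((lis (alternatingWord i j (2 * M i j))).count x) := by
  have hperiod : ∀ k, s i * (s j * s i) ^ (M i j + k) = s i * (s j * s i) ^ k := by
    simp [pow_add]
  rw [cs.leftInvSeq_alternatingWord_two_mul, two_mul, List.range_add, List.map_append,
    List.map_map, Function.comp_def]
  simp only [hperiod, List.count_append]
  exact Even.add_self _

theorem _root_.CoxeterSystem.isLiftable_signPerm : M.IsLiftable cs.signPerm := by
  intro i j
  rw [← prod_map_alternatingWord_two_mul]
  ext ⟨x, ε⟩ : 1
  have hπ : π (alternatingWord i j (2 * M i j)) = 1 := by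
    simp [cs.prod_alternatingWord_eq_mul_pow]
  rw [cs.prod_map_signPerm_apply, hπ,
    (cs.even_count_leftInvSeq_alternatingWord_two_mul i j _).neg_one_pow]
  simp

def _root_.CoxeterSystem.signAction : W →* Equiv.Perm (W × ℤˣ) :=
  cs.lift ⟨cs.signPerm, cs.isLiftable_signPerm⟩

theorem _root_.CoxeterSystem.signAction_simple (i : B) : cs.signAction (s i) = cs.signPerm i :=
  cs.lift_apply_simple cs.isLiftable_signPerm i

theorem _root_.CoxeterSystem.signAction_wordProd_apply (ω : List B) (x : W) (ε : ℤˣ) :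
    cs.signAction (π ω) (x, ε) =
      (MulAut.conj (π ω) x, ε * (-1) ^ (lis ω).count (MulAut.conj (π ω) x)) := by
  rw [← cs.prod_map_signPerm_apply, wordProd, map_list_prod, List.map_map]
  congr 3
  ext i : 1
  exact cs.signAction_simple i

theorem _root_.CoxeterSystem.signAction_apply_fst (w : W) (p : W × ℤˣ) :
    (cs.signAction w p).1 = MulAut.conj w p.1 := by
  obtain ⟨ω, rfl⟩ := cs.wordProd_surjective w
  simp [cs.signAction_wordProd_apply]

theorem _root_.CoxeterSystem.signAction_apply_neg (w x : W) (ε : ℤˣ) :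
    cs.signAction w (x, -ε) = ((cs.signAction w (x, ε)).1, -(cs.signAction w (x, ε)).2) := by
  obtain ⟨ω, rfl⟩ := cs.wordProd_surjective w
  simp [cs.signAction_wordProd_apply]

theorem _root_.CoxeterSystem.signAction_apply_self {t : W} (ht : cs.IsReflection t) (ε : ℤˣ) :
    cs.signAction t (t, ε) = (t, -ε) := by
  obtain ⟨u, i, rfl⟩ := ht
  set p := cs.signAction u⁻¹ (u * s i * u⁻¹, ε)
  have hp₁ : p.1 = s i := by
    rw [cs.signAction_apply_fst, MulAut.conj_apply]
    group
  have hp : cs.signAction u p = (u * s i * u⁻¹, ε) := by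
    rw [← Equiv.Perm.mul_apply, ← map_mul, mul_inv_cancel, map_one, Equiv.Perm.one_apply]
  calc cs.signAction (u * s i * u⁻¹) (u * s i * u⁻¹, ε)
      = cs.signAction u (cs.signPerm i p) := by
        simp only [map_mul, map_inv, Equiv.Perm.mul_apply, cs.signAction_simple, p]
    _ = cs.signAction u (p.1, -p.2) := by
        rw [← Prod.mk.eta (p := p), cs.signPerm_apply, hp₁]
        simp
    _ = (u * s i * u⁻¹, -ε) := by rw [cs.signAction_apply_neg, Prod.mk.eta, hp]

theorem _root_.CoxeterSystem.mem_leftInvSeq_of_isLeftInversion {ω : List B} {t : W}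
    (ht : cs.IsLeftInversion (π ω) t) : t ∈ lis ω := by
  -- Evaluate `signAction (π ω)` at `((π ω)⁻¹ t (π ω), 1)` along `ω`, where the sign stays `1`, and
  -- along `π ω = t * (t * π ω)`, where `t` flips it: so `t` occurs in the left inversion sequence
  -- of a reduced word for `t * π ω`, i.e. it is a left inversion of `t * π ω` as well.
  by_contra hmem
  obtain ⟨ω', hω', htω⟩ := cs.exists_isReduced (t * π ω)
  have hconj : MulAut.conj (π ω) (MulAut.conj (π ω)⁻¹ t) = t := by
    rw [← MulAut.mul_apply, ← map_mul, mul_inv_cancel, map_one, MulAut.one_apply]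
  have hsign : cs.signAction (π ω) (MulAut.conj (π ω)⁻¹ t, 1) = (t, 1) := by
    rw [cs.signAction_wordProd_apply, hconj, List.count_eq_zero_of_not_mem hmem]
    simp
  have hsign' : cs.signAction (t * π ω) (MulAut.conj (π ω)⁻¹ t, 1) =
      (t, (-1) ^ (lis ω').count t) := by
    rw [htω, cs.signAction_wordProd_apply, ← htω]
    simp [mul_assoc, ht.1.mul_self, ht.1.inv]
  have hsplit : cs.signAction (π ω) = cs.signAction t * cs.signAction (t * π ω) := by
    rw [← map_mul, ← mul_assoc, ht.1.mul_self, one_mul]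
  rw [hsplit, Equiv.Perm.mul_apply, hsign', cs.signAction_apply_self ht.1] at hsign
  have hcount : (lis ω').count t ≠ 0 := by
    intro h
    simp [h] at hsign
  have hlt := (cs.isLeftInversion_of_mem_leftInvSeq hω'
    (List.count_pos_iff.mp (Nat.pos_of_ne_zero hcount))).2
  rw [← htω, ← mul_assoc, ht.1.mul_self, one_mul] at hlt
  exact lt_asymm hlt ht.2

theorem _root_.CoxeterSystem.IsLeftInversion.of_mul {x y t : W}
    (ht : cs.IsLeftInversion (x * y) t) :
    cs.IsLeftInversion x t ∨ cs.IsLeftInversion y (x⁻¹ * t * x) := by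
  obtain ⟨ωx, hωx, rfl⟩ := cs.exists_isReduced x
  obtain ⟨ωy, hωy, rfl⟩ := cs.exists_isReduced y
  rw [← cs.wordProd_append] at ht
  have hmem := cs.mem_leftInvSeq_of_isLeftInversion ht
  rw [cs.leftInvSeq_append, List.mem_append] at hmem
  rcases hmem with hx | hy
  · exact .inl (cs.isLeftInversion_of_mem_leftInvSeq hωx hx)
  · obtain ⟨r, hr, rfl⟩ := List.mem_map.mp hy
    right
    simpa [mul_assoc] using cs.isLeftInversion_of_mem_leftInvSeq hωy hr

theorem _root_.CoxeterSystem.eq_simple_of_isLeftInversion_simple {r : W} {i : B}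
    (h : cs.IsLeftInversion (s i) r) : r = s i := by
  have h0 : ℓ (r * s i) = 0 := by
    have := h.2
    rw [cs.length_simple] at this
    omega
  rwa [cs.length_eq_zero_iff, mul_eq_one_iff_eq_inv, cs.inv_simple] at h0

theorem _root_.CoxeterSystem.mul_eq_mul_simple_of_isLeftInversion {a t : W} {i : B}
    (ht : cs.IsLeftInversion (a * s i) t) (hta : ¬cs.IsLeftInversion a t) :
    t * a = a * s i := by
  rcases ht.of_mul with h | h
  · exact absurd h hta
  · rw [← cs.eq_simple_of_isLeftInversion_simple h]
    group

theorem _root_.CoxeterSystem.exists_mul_eq_mul_mul_simple {x y : W} {i : B}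
    (hxy : cs.IsRightDescent (x * y) i) (hy : ¬cs.IsRightDescent y i) :
    ∃ x', x' * y = x * y * s i ∧ ℓ x' < ℓ x := by
  set t := x * y * s i * (x * y)⁻¹
  have htxy : t * (x * y) = x * y * s i := by simp only [t]; group
  have ht : cs.IsLeftInversion (x * y) t := ⟨⟨x * y, i, rfl⟩, htxy ▸ hxy⟩
  rcases ht.of_mul with h | h
  · exact ⟨t * x, by rw [mul_assoc t x y, htxy], h.2⟩
  · have hty := h.2
    rw [show x⁻¹ * t * x * y = y * s i by simp only [t]; group] at hty
    exact absurd hty hy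

theorem _root_.CoxeterSystem.length_mul_mul_simple {a b : W} {i : B}
    (h : ℓ (a * b) = ℓ a + ℓ b) (hb : cs.IsRightDescent b i) :
    ℓ (a * (b * s i)) = ℓ a + ℓ (b * s i) := by
  have h₁ := cs.length_mul_le a (b * s i)
  have h₂ := cs.length_mul_simple (a * b) i
  rw [cs.isRightDescent_iff] at hb
  rw [mul_assoc] at h₂
  omega

theorem _root_.CoxeterSystem.length_simple_mul_mul_simple {w : W} {i j : B}
    (hw : ℓ w < ℓ (s j * w)) (hi : cs.IsRightDescent w i) : ℓ (s j * w * s i) = ℓ w := by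
  have h₁ := cs.length_simple_mul (w * s i) j
  have h₂ := cs.length_mul_simple (s j * w * s i) i
  rw [cs.simple_mul_simple_cancel_right] at h₂
  rw [cs.isRightDescent_iff] at hi
  rw [mul_assoc] at h₂ ⊢
  omega

end StrongExchange

section Bruhat

variable {cs}

local prefix:100 "s " => cs.simple
local prefix:100 "ℓ " => cs.length

theorem BStep.eq_or_length_lt {u w : W} (h : BStep cs u w) : u = w ∨ ℓ u < ℓ w := by
  obtain ⟨hle, t, ht | rfl, rfl⟩ := h
  · exact .inr (lt_of_le_of_ne hle (ht.length_mul_right_ne u).symm)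
  · exact .inl (one_mul u).symm

theorem BrLe.length_le {u w : W} (h : BrLe cs u w) : ℓ u ≤ ℓ w := by
  induction h with
  | refl => exact le_rfl
  | tail _ hstep ih => exact ih.trans hstep.1

theorem BrLe.eq_of_length_eq {u w : W} (h : BrLe cs u w) (hl : ℓ u = ℓ w) : u = w := by
  induction h with
  | refl => rfl
  | tail hub hstep ih =>
    rcases hstep.eq_or_length_lt with rfl | hlt
    · exact ih hl
    · exact absurd hl ((BrLe.length_le hub).trans_lt hlt).ne

theorem BrLe.eq_one_or_eq_simple {u : W} {i : B} (h : BrLe cs u (s i)) : u = 1 ∨ u = s i := by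
  have hl := h.length_le
  rw [cs.length_simple] at hl
  rcases Nat.le_one_iff_eq_zero_or_eq_one.mp hl with h₀ | h₁
  · exact .inl (cs.length_eq_zero_iff.mp h₀)
  · exact .inr (h.eq_of_length_eq (by rw [h₁, cs.length_simple]))

theorem bStep_mul_simple {w : W} {i : B} (h : ℓ w ≤ ℓ (w * s i)) : BStep cs w (w * s i) :=
  ⟨h, w * s i * w⁻¹, .inl ⟨w, i, rfl⟩, by group⟩

theorem brLe_mul_simple {w : W} {i : B} (hw : ¬cs.IsRightDescent w i) : BrLe cs w (w * s i) :=
  .single (bStep_mul_simple (not_lt.mp hw))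

theorem mul_simple_brLe {w : W} {i : B} (hw : cs.IsRightDescent w i) : BrLe cs (w * s i) w := by
  have h := bStep_mul_simple (cs := cs) (w := w * s i) (i := i)
  rw [cs.simple_mul_simple_cancel_right] at h
  exact .single (h hw.le)

theorem BStep.mul_simple_or_eq {a c : W} {i : B} (h : BStep cs a c) :
    BStep cs (a * s i) (c * s i) ∨ c = a * s i := by
  obtain ⟨hle, t, ht, rfl⟩ := h
  by_cases hl : ℓ (a * s i) ≤ ℓ (t * a * s i)
  · exact .inl ⟨hl, t, ht, mul_assoc t a (s i)⟩
  rcases ht with ht | rfl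
  · refine .inr (cs.mul_eq_mul_simple_of_isLeftInversion ⟨ht, ?_⟩ fun hta => ?_)
    · rwa [← mul_assoc, ← not_le]
    · exact absurd hta.2 (not_lt.mpr hle)
  · simp at hl

theorem BrLe.mul_simple {u w : W} {i : B} (h : BrLe cs u w) (hw : ¬cs.IsRightDescent w i) :
    BrLe cs (u * s i) (w * s i) := by
  induction h using Relation.ReflTransGen.head_induction_on with
  | refl => exact .refl
  | head hac hcw ih =>
    rcases hac.mul_simple_or_eq (i := i) with hstep | rfl
    · exact .head hstep ih
    · exact hcw.trans (brLe_mul_simple hw)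

theorem BrLe.le_mul_simple {u w : W} {i : B} (h : BrLe cs u w) (hw : cs.IsRightDescent w i)
    (hu : ¬cs.IsRightDescent u i) : BrLe cs u (w * s i) := by
  induction h with
  | refl => exact absurd hw hu
  | @tail b c hub hbc ih =>
    rcases hbc.mul_simple_or_eq (i := i) with hstep | rfl
    · have hub' : BrLe cs u (b * s i) := by
        by_cases hb : cs.IsRightDescent b i
        · exact ih hb
        · exact hub.trans (brLe_mul_simple hb)
      exact hub'.tail hstep
    · rwa [cs.simple_mul_simple_cancel_right]

theorem BrLe.mul_simple_of_isRightDescent {u w : W} {i : B} (h : BrLe cs u w)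
    (hw : cs.IsRightDescent w i) (hu : cs.IsRightDescent u i) : BrLe cs (u * s i) (w * s i) :=
  BrLe.le_mul_simple ((mul_simple_brLe hu).trans h) hw
    (cs.isRightDescent_iff_not_isRightDescent_mul.mp hu)

end Bruhat

/-- the technical Bruhat order lemma. -/
theorem stmt13 (s : B) (x y v w : W)
    (h1 : x * y = v * w)
    (h2 : cs.length (x * y) = cs.length x + cs.length y)
    (h3 : cs.length x + cs.length y = cs.length v + cs.length w)
    (h4 : cs.length w < cs.length (cs.simple s * w))
    (h5 : cs.length v < cs.length (v * cs.simple s))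
    (h6 : BrLe cs y (cs.simple s * w)) :
    BrLe cs y w := by
  obtain rfl | hw := eq_or_ne w 1
  · rw [mul_one] at h1 h6
    obtain rfl | rfl := h6.eq_one_or_eq_simple
    · exact .refl
    · rw [← h1, cs.simple_mul_simple_cancel_right] at h5
      rw [cs.length_simple, cs.length_one] at h3
      omega
  obtain ⟨i, hi⟩ := cs.exists_rightDescent_of_ne_one hw
  have hwi := cs.isRightDescent_iff.mp hi
  have hswi := cs.length_simple_mul_mul_simple h4 hi
  have hvw : cs.length (v * w) = cs.length v + cs.length w := h1 ▸ h2.trans h3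
  have hvwi := cs.length_mul_mul_simple hvw hi
  have h1' : x * y * cs.simple i = v * (w * cs.simple i) := by rw [h1, mul_assoc]
  have h4' : cs.length (w * cs.simple i) < cs.length (cs.simple s * (w * cs.simple i)) := by
    rw [← mul_assoc, hswi]; exact hi
  have hsw : cs.IsRightDescent (cs.simple s * w) i := by
    rw [CoxeterSystem.IsRightDescent, hswi]; exact h4
  by_cases hy : cs.IsRightDescent y i
  · have hyi := cs.isRightDescent_iff.mp hy
    have h6' := h6.mul_simple_of_isRightDescent hsw hy
    rw [mul_assoc] at h6'
    have hyw := stmt13 s x (y * cs.simple i) v (w * cs.simple i) (by rw [← mul_assoc, h1'])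
      (cs.length_mul_mul_simple h2 hy) (by omega) h4' h5 h6'
    simpa only [cs.simple_mul_simple_cancel_right] using
      hyw.mul_simple (cs.isRightDescent_iff_not_isRightDescent_mul.mp hi)
  · obtain ⟨x', hx'y, hx'⟩ := cs.exists_mul_eq_mul_mul_simple (x := x) (y := y)
      (by rw [CoxeterSystem.IsRightDescent, h1', h1, hvwi]; omega) hy
    rw [h1'] at hx'y
    have hx'y_len := congrArg cs.length hx'y
    have := cs.length_mul_le x' y
    have h6' := h6.le_mul_simple hsw hy
    rw [mul_assoc] at h6'
    exact (stmt13 s x' y v (w * cs.simple i) hx'y (by omega) (by omega) h4' h5 h6').trans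
      (mul_simple_brLe hi)
termination_by cs.length w
decreasing_by all_goals omega

end WGI
end
end

section
/- Let (W,S) be a Coxeter system, K ⊆ S, and 𝔍₀ ⊆ W_K an ideal of (W_K, ≤_L). Then 𝔍 = D_K·𝔍₀ = { dz : d ∈ D_K, z ∈ 𝔍₀ } is an ideal of (W, ≤_L); i.e., if s ∈ S and w ∈ D_K·𝔍₀ with l(sw) < l(w), then sw ∈ D_K·𝔍₀. -/
open LaurentPolynomial Polynomial

noncomputable section

namespace WGI

variable {B W : Type} [Group W] {M : CoxeterMatrix B} (cs : CoxeterSystem M W)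

open scoped Classical

open List CoxeterSystem

/-!
The exchange condition comes from Tits' sign cocycle: letting `s_i` act on `W × {±1}` by
`(t, ε) ↦ (s_i t s_i, ±ε)`, with a sign change exactly when `t = s_i`, respects the Coxeter
relations, so the parity of the number of occurrences of a reflection in the left inversion
sequence of a word depends only on the product of the word.

With the exchange condition, `ℓ(dz) = ℓ(d) + ℓ(z)` for `d ∈ D_K` and `z ∈ W_K` (induction on
`ℓ(d)`), and if `ℓ(ws_j) > ℓ(w)` but `ℓ(s w s_j) < ℓ(s w)` then `s w = w s_j` (Deodhar). Now let
`s` be a left descent of `dz` with `d ∈ D_K`, `z ∈ 𝔍₀`. If `sd < d`, then `sd ∈ D_K` and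
`s dz = (sd) z`. Otherwise additivity rules out `sd ∈ D_K`, so some `j ∈ K` is a right descent
of `sd`; then `sd = d s_j`, and `s dz = d (s_j z)` where `s_j z ≤_L z` lies in `𝔍₀`. Closure
under left descents gives closure under `≤_L` by induction on `ℓ(wu⁻¹)`.
-/

section ExchangeCondition

variable {B W : Type*} [Group W] {M : CoxeterMatrix B} (cs : CoxeterSystem M W)

theorem _root_.CoxeterSystem.simple_conj_eq_simple_iff {i : B} {t : W} :
    cs.simple i * t * cs.simple i = cs.simple i ↔ t = cs.simple i := by
  rw [mul_assoc, mul_eq_left, mul_eq_one_iff_eq_inv, cs.inv_simple]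

def _root_.CoxeterSystem.signedConj (i : B) : Equiv.Perm (W × ℤˣ) :=
  Function.Involutive.toPerm
    (fun p ↦ (cs.simple i * p.1 * cs.simple i, if p.1 = cs.simple i then -p.2 else p.2))
    (by
      rintro ⟨t, ε⟩
      simp only [cs.simple_conj_eq_simple_iff, Prod.mk.injEq]
      refine ⟨by simp [mul_assoc, cs.simple_mul_simple_cancel_left], ?_⟩
      split_ifs <;> simp)

theorem _root_.CoxeterSystem.signedConj_apply (i : B) (t : W) (ε : ℤˣ) :
    cs.signedConj i (t, ε) =
      (cs.simple i * t * cs.simple i, if t = cs.simple i then -ε else ε) := rfl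

theorem _root_.CoxeterSystem.signedConj_inv (i : B) : (cs.signedConj i)⁻¹ = cs.signedConj i :=
  Function.Involutive.toPerm_symm _

theorem _root_.CoxeterSystem.count_leftInvSeq_cons (i : B) (ω : List B) (t : W) :
    (cs.leftInvSeq (i :: ω)).count t =
      (cs.leftInvSeq ω).count (cs.simple i * t * cs.simple i) +
        if t = cs.simple i then 1 else 0 := by
  have hconj : t = MulAut.conj (cs.simple i) (cs.simple i * t * cs.simple i) := by
    simp [mul_assoc, cs.simple_mul_simple_cancel_left]
  rw [leftInvSeq, count_cons]
  nth_rw 1 [hconj]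
  rw [count_map_of_injective _ _ (MulAut.conj _).injective]
  by_cases ht : t = cs.simple i <;> simp [ht, Ne.symm]

theorem _root_.CoxeterSystem.prod_map_signedConj_inv_apply (ω : List B) (t : W) (ε : ℤˣ) :
    (ω.map cs.signedConj).prod⁻¹ (t, ε) =
      ((cs.wordProd ω)⁻¹ * t * cs.wordProd ω, (-1) ^ (cs.leftInvSeq ω).count t * ε) := by
  induction ω generalizing t ε with
  | nil => simp
  | cons i ω ih =>
    rw [map_cons, prod_cons, mul_inv_rev, Equiv.Perm.mul_apply, cs.signedConj_inv,
      cs.signedConj_apply, ih, cs.count_leftInvSeq_cons, cs.wordProd_cons]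
    simp only [mul_inv_rev, cs.inv_simple, Prod.mk.injEq, mul_assoc, true_and]
    split_ifs <;> simp [pow_succ]

theorem _root_.CoxeterSystem.prod_map_signedConj_alternatingWord (i j : B) (p : ℕ) :
    ((alternatingWord i j (2 * p)).map cs.signedConj).prod =
      (cs.signedConj i * cs.signedConj j) ^ p := by
  induction p with
  | zero => simp [alternatingWord]
  | succ p ih =>
    have hword : alternatingWord i j (2 * (p + 1)) =
        i :: j :: alternatingWord i j (2 * p) := by
      rw [show 2 * (p + 1) = 2 * p + 1 + 1 by ring, alternatingWord_succ',
        alternatingWord_succ']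
      simp
    rw [hword, map_cons, map_cons, prod_cons, prod_cons, ih, pow_succ', mul_assoc]

theorem _root_.CoxeterSystem.wordProd_alternatingWord_two_mul_add_one (i j : B) (k : ℕ) :
    cs.wordProd (alternatingWord i j (2 * k + 1)) =
      cs.simple j * (cs.simple i * cs.simple j) ^ k := by
  rw [cs.prod_alternatingWord_eq_mul_pow, if_neg (by simp),
    show (2 * k + 1) / 2 = k by omega]

theorem _root_.CoxeterSystem.even_count_leftInvSeq_alternatingWord (i j : B) (t : W) :
    Even ((cs.leftInvSeq (alternatingWord i j (2 * M i j))).count t) := by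
  set l := cs.leftInvSeq (alternatingWord i j (2 * M i j))
  have hlen : l.length = 2 * M i j := by simp [l]
  have hhalf : l.drop (M i j) = l.take (M i j) := by
    refine ext_getElem (by simp [hlen]; omega) fun k h₁ h₂ ↦ ?_
    simp only [length_drop, hlen] at h₁
    rw [getElem_drop, getElem_take, cs.getElem_leftInvSeq_alternatingWord _ _ _ _ (by omega),
      cs.getElem_leftInvSeq_alternatingWord _ _ _ _ (by omega),
      cs.wordProd_alternatingWord_two_mul_add_one, cs.wordProd_alternatingWord_two_mul_add_one,
      pow_add, cs.simple_mul_simple_pow', one_mul]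
  rw [← take_append_drop (M i j) l, count_append, hhalf]
  exact ⟨_, rfl⟩

theorem _root_.CoxeterSystem.isLiftable_signedConj : M.IsLiftable cs.signedConj := by
  intro i j
  rw [← cs.prod_map_signedConj_alternatingWord, ← inv_inj, inv_one]
  ext ⟨t, ε⟩ : 1
  rw [cs.prod_map_signedConj_inv_apply,
    (cs.even_count_leftInvSeq_alternatingWord i j t).neg_one_pow,
    cs.prod_alternatingWord_eq_mul_pow, if_pos (by simp), Nat.mul_div_cancel_left _ two_pos,
    cs.simple_mul_simple_pow]
  simp

theorem _root_.CoxeterSystem.neg_one_pow_count_leftInvSeq_eq_of_wordProd_eq {ω ω' : List B}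
    (h : cs.wordProd ω = cs.wordProd ω') (t : W) :
    (-1 : ℤˣ) ^ (cs.leftInvSeq ω).count t = (-1) ^ (cs.leftInvSeq ω').count t := by
  have hlift (ω : List B) :
      cs.lift ⟨_, cs.isLiftable_signedConj⟩ (cs.wordProd ω) = (ω.map cs.signedConj).prod := by
    rw [wordProd, map_list_prod, map_map]
    congr 2
    ext i : 1
    exact cs.lift_apply_simple _ i
  have := congr_arg (fun w ↦ ((cs.lift ⟨_, cs.isLiftable_signedConj⟩ w)⁻¹ (t, 1)).2) h
  simpa [hlift, cs.prod_map_signedConj_inv_apply] using this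

theorem _root_.CoxeterSystem.simple_mem_leftInvSeq_of_isLeftDescent {ω : List B} {j : B}
    (h : cs.IsLeftDescent (cs.wordProd ω) j) : cs.simple j ∈ cs.leftInvSeq ω := by
  by_contra hω
  obtain ⟨τ, hτ, hτω⟩ := cs.exists_isReduced (cs.simple j * cs.wordProd ω)
  have hjτ : cs.simple j ∉ cs.leftInvSeq τ := fun hmem ↦ by
    have := (cs.isLeftInversion_of_mem_leftInvSeq hτ hmem).2
    rw [← hτω, cs.simple_mul_simple_cancel_left] at this
    exact lt_asymm this h
  have hprod : cs.wordProd ω = cs.wordProd (j :: τ) := by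
    rw [cs.wordProd_cons, ← hτω, cs.simple_mul_simple_cancel_left]
  have := cs.neg_one_pow_count_leftInvSeq_eq_of_wordProd_eq hprod (cs.simple j)
  rw [count_eq_zero_of_not_mem hω, cs.count_leftInvSeq_cons, cs.simple_mul_simple_cancel_right,
    count_eq_zero_of_not_mem hjτ, if_pos rfl] at this
  exact absurd this (by decide)

theorem _root_.CoxeterSystem.simple_mem_rightInvSeq_of_isRightDescent {ω : List B} {j : B}
    (h : cs.IsRightDescent (cs.wordProd ω) j) : cs.simple j ∈ cs.rightInvSeq ω := by
  rw [← cs.isLeftDescent_inv_iff, ← cs.wordProd_reverse] at h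
  simpa [cs.leftInvSeq_reverse] using cs.simple_mem_leftInvSeq_of_isLeftDescent h

theorem _root_.CoxeterSystem.exists_simple_mul_eq_wordProd_eraseIdx {ω : List B} {j : B}
    (h : cs.IsLeftDescent (cs.wordProd ω) j) :
    ∃ m < ω.length, cs.simple j * cs.wordProd ω = cs.wordProd (ω.eraseIdx m) := by
  obtain ⟨m, hm, hget⟩ := mem_iff_getElem.mp (cs.simple_mem_leftInvSeq_of_isLeftDescent h)
  refine ⟨m, by simpa using hm, ?_⟩
  rw [← cs.getD_leftInvSeq_mul_wordProd, getD_eq_getElem _ _ hm, hget]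

theorem _root_.CoxeterSystem.exists_mul_simple_eq_wordProd_eraseIdx {ω : List B} {j : B}
    (h : cs.IsRightDescent (cs.wordProd ω) j) :
    ∃ m < ω.length, cs.wordProd ω * cs.simple j = cs.wordProd (ω.eraseIdx m) := by
  obtain ⟨m, hm, hget⟩ := mem_iff_getElem.mp (cs.simple_mem_rightInvSeq_of_isRightDescent h)
  refine ⟨m, by simpa using hm, ?_⟩
  rw [← cs.wordProd_mul_getD_rightInvSeq, getD_eq_getElem _ _ hm, hget]

theorem _root_.CoxeterSystem.exists_isReduced_sublist (ω : List B) :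
    ∃ ω' : List B, ω'.Sublist ω ∧ cs.IsReduced ω' ∧ cs.wordProd ω' = cs.wordProd ω := by
  induction ω with
  | nil => exact ⟨[], .slnil, by simp [CoxeterSystem.IsReduced], rfl⟩
  | cons j ω ih =>
    obtain ⟨ω', hsub, hred, hprod⟩ := ih
    rw [cs.wordProd_cons, ← hprod]
    by_cases hj : cs.IsLeftDescent (cs.wordProd ω') j
    · obtain ⟨m, hm, heq⟩ := cs.exists_simple_mul_eq_wordProd_eraseIdx hj
      refine ⟨ω'.eraseIdx m, ((eraseIdx_sublist _ _).trans hsub).cons j, ?_, heq.symm⟩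
      rw [cs.isLeftDescent_iff, heq] at hj
      rw [CoxeterSystem.IsReduced, length_eraseIdx_of_lt hm, ← hred]
      omega
    · refine ⟨j :: ω', hsub.cons_cons j, ?_, cs.wordProd_cons _ _⟩
      rw [cs.not_isLeftDescent_iff, hred] at hj
      rw [CoxeterSystem.IsReduced, cs.wordProd_cons, hj, length_cons]

theorem _root_.CoxeterSystem.mem_closure_simple_image_iff {K : Set B} {w : W} :
    w ∈ Subgroup.closure (cs.simple '' K) ↔
      ∃ ω : List B, (∀ i ∈ ω, i ∈ K) ∧ cs.wordProd ω = w := by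
  constructor
  · intro hw
    induction hw using Subgroup.closure_induction with
    | mem x hx =>
      obtain ⟨i, hi, rfl⟩ := hx
      exact ⟨[i], by simpa using hi, cs.wordProd_singleton i⟩
    | one => exact ⟨[], by simp, cs.wordProd_nil⟩
    | mul x y _ _ hx hy =>
      obtain ⟨ω, hωK, rfl⟩ := hx
      obtain ⟨ω', hω'K, rfl⟩ := hy
      exact ⟨ω ++ ω', by simpa using fun i ↦ Or.rec (hωK i) (hω'K i),
        cs.wordProd_append _ _⟩
    | inv x _ hx =>
      obtain ⟨ω, hωK, rfl⟩ := hx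
      exact ⟨ω.reverse, by simpa using hωK, cs.wordProd_reverse _⟩
  · rintro ⟨ω, hωK, rfl⟩
    refine Subgroup.list_prod_mem _ fun x hx ↦ ?_
    obtain ⟨i, hi, rfl⟩ := mem_map.mp hx
    exact Subgroup.subset_closure ⟨i, hωK i hi, rfl⟩

theorem _root_.CoxeterSystem.exists_isReduced_of_mem_closure {K : Set B} {w : W}
    (hw : w ∈ Subgroup.closure (cs.simple '' K)) :
    ∃ ω : List B, (∀ i ∈ ω, i ∈ K) ∧ cs.IsReduced ω ∧ cs.wordProd ω = w := by
  obtain ⟨ω, hωK, rfl⟩ := cs.mem_closure_simple_image_iff.mp hw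
  obtain ⟨ω', hsub, hred, hprod⟩ := cs.exists_isReduced_sublist ω
  exact ⟨ω', fun i hi ↦ hωK i (hsub.subset hi), hred, hprod⟩

theorem _root_.CoxeterSystem.exists_mem_eq_simple_of_mem_closure_of_length_eq_one
    {K : Set B} {w : W}
    (hw : w ∈ Subgroup.closure (cs.simple '' K)) (hlen : cs.length w = 1) :
    ∃ k ∈ K, w = cs.simple k := by
  obtain ⟨ω, hωK, hred, rfl⟩ := cs.exists_isReduced_of_mem_closure hw
  obtain ⟨k, rfl⟩ := length_eq_one_iff.mp (hred.symm.trans hlen)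
  exact ⟨k, hωK k (mem_singleton_self k), cs.wordProd_singleton k⟩

theorem _root_.CoxeterSystem.simple_mul_eq_mul_simple {w : W} {i j : B}
    (hw : ¬cs.IsRightDescent w j) (h : cs.IsRightDescent (cs.simple i * w) j) :
    cs.simple i * w = w * cs.simple j := by
  obtain ⟨δ, hδ, rfl⟩ := cs.exists_isReduced w
  rw [← cs.wordProd_cons] at h
  obtain ⟨m, hm, heq⟩ := cs.exists_mul_simple_eq_wordProd_eraseIdx h
  rcases m with _ | m
  · rw [eraseIdx_cons_zero, cs.wordProd_cons] at heq
    nth_rw 2 [← heq]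
    rw [cs.simple_mul_simple_cancel_right]
  · rw [eraseIdx_cons_succ, cs.wordProd_cons, cs.wordProd_cons, mul_assoc,
      mul_right_inj] at heq
    refine absurd ?_ hw
    have hle := cs.length_wordProd_le (δ.eraseIdx m)
    rw [length_eraseIdx_of_lt (by simpa using hm), ← heq, ← hδ] at hle
    have := cs.length_mul_simple_ne (cs.wordProd δ) j
    rw [IsRightDescent]
    omega

end ExchangeCondition

theorem mem_DD_iff {K : Set B} {d : W} :
    d ∈ DD cs K ↔ ∀ j ∈ K, ¬cs.IsRightDescent d j := by
  refine forall₂_congr fun j _ ↦ ?_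
  rw [cs.not_isRightDescent_iff]
  have := cs.length_mul_simple_ne d j
  constructor <;> intro h
  · rcases cs.length_mul_simple d j with h' | h' <;> omega
  · omega

theorem simple_mul_mem_DD {K : Set B} {d : W} {i : B} (hd : d ∈ DD cs K)
    (hi : cs.IsLeftDescent d i) : cs.simple i * d ∈ DD cs K := by
  rw [mem_DD_iff] at hd ⊢
  intro j hj
  have hdj := cs.not_isRightDescent_iff.mp (hd j hj)
  rw [cs.isLeftDescent_iff] at hi
  rw [cs.not_isRightDescent_iff]
  have := cs.length_simple_mul (cs.simple i * d * cs.simple j) i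
  rw [← mul_assoc, ← mul_assoc, cs.simple_mul_simple_self, one_mul] at this
  rcases cs.length_mul_simple (cs.simple i * d) j with h | h <;> omega

theorem not_isLeftDescent_mul_of_simple_mul_mem_DD {K : Set B} {d z : W} {i : B}
    (hsd : cs.simple i * d ∈ DD cs K) (hdi : ¬cs.IsLeftDescent d i)
    (hadd : ∀ y ∈ Subgroup.closure (cs.simple '' K),
      cs.length (d * y) = cs.length d + cs.length y)
    (hz : z ∈ Subgroup.closure (cs.simple '' K)) : ¬cs.IsLeftDescent (d * z) i := by
  intro h
  rw [cs.not_isLeftDescent_iff] at hdi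
  obtain ⟨δ, hδ, rfl⟩ := cs.exists_isReduced d
  obtain ⟨ζ, hζK, -, rfl⟩ := cs.exists_isReduced_of_mem_closure hz
  rw [← cs.wordProd_append] at h
  obtain ⟨m, -, heq⟩ := cs.exists_simple_mul_eq_wordProd_eraseIdx h
  rw [cs.wordProd_append, ← mul_assoc] at heq
  -- The exchange deletes a letter either of `δ`, making `s d` shorter than `d`, or of `ζ`, so
  -- that `s d = d y` with `y ∈ W_K` of length one, i.e. `y = s k` with `k ∈ K`.
  by_cases hm : m < δ.length
  · rw [eraseIdx_append_of_lt_length hm, cs.wordProd_append, mul_left_inj] at heq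
    have hle := cs.length_wordProd_le (δ.eraseIdx m)
    rw [length_eraseIdx_of_lt hm, ← heq, ← hδ] at hle
    omega
  · rw [eraseIdx_append_of_length_le (not_lt.mp hm), cs.wordProd_append] at heq
    set y := cs.wordProd (ζ.eraseIdx (m - δ.length)) * (cs.wordProd ζ)⁻¹
    have hy : y ∈ Subgroup.closure (cs.simple '' K) :=
      mul_mem (cs.mem_closure_simple_image_iff.mpr
        ⟨_, fun i hi ↦ hζK i (mem_of_mem_eraseIdx hi), rfl⟩) (inv_mem hz)
    have hdy : cs.simple i * cs.wordProd δ = cs.wordProd δ * y := by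
      rw [← mul_assoc, ← heq, mul_inv_cancel_right]
    obtain ⟨k, hk, hyk⟩ := cs.exists_mem_eq_simple_of_mem_closure_of_length_eq_one hy (by
      have := hadd y hy
      rw [← hdy] at this
      omega)
    have hdk := (mem_DD_iff cs).mp hsd k hk
    rw [cs.not_isRightDescent_iff, hdy, hyk, cs.simple_mul_simple_cancel_right] at hdk
    rw [hdy, hyk] at hdi
    omega

theorem length_mul_of_mem_DD {K : Set B} {d z : W} (hd : d ∈ DD cs K)
    (hz : z ∈ Subgroup.closure (cs.simple '' K)) :
    cs.length (d * z) = cs.length d + cs.length z := by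
  induction hn : cs.length d generalizing d z with
  | zero => simp [cs.length_eq_zero_iff.mp hn]
  | succ n ih =>
    obtain ⟨i, hi⟩ := cs.exists_leftDescent_of_ne_one (w := d) fun h ↦ by simp [h] at hn
    obtain ⟨d', rfl⟩ : ∃ d', d = cs.simple i * d' :=
      ⟨_, (cs.simple_mul_simple_cancel_left i).symm⟩
    have hd' : d' ∈ DD cs K := by
      simpa [cs.simple_mul_simple_cancel_left] using simple_mul_mem_DD cs hd hi
    rw [cs.isLeftDescent_iff_not_isLeftDescent_mul, cs.simple_mul_simple_cancel_left] at hi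
    have hn' : cs.length d' = n := by
      have := cs.not_isLeftDescent_iff.mp hi
      omega
    have hadd (y : W) (hy : y ∈ Subgroup.closure (cs.simple '' K)) :
        cs.length (d' * y) = cs.length d' + cs.length y := hn' ▸ ih hd' hy hn'
    rw [mul_assoc, cs.not_isLeftDescent_iff.mp
      (not_isLeftDescent_mul_of_simple_mul_mem_DD cs hd hi hadd hz), hadd z hz, hn']
    ring

theorem wkLe_simple_mul {w : W} {i : B} (h : cs.IsLeftDescent w i) :
    WkLe cs (cs.simple i * w) w := by
  rw [cs.isLeftDescent_iff] at h
  rw [WkLe, mul_inv_rev, cs.inv_simple, mul_inv_cancel_left, cs.length_simple, add_comm, h]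

theorem isIdealWk_of_simple_mul_mem {I : Set W}
    (h : ∀ w ∈ I, ∀ i, cs.IsLeftDescent w i → cs.simple i * w ∈ I) : IsIdealWk cs I := by
  intro u w huw hw
  induction hn : cs.length (w * u⁻¹) generalizing w with
  | zero => rwa [← mul_inv_eq_one.mp (cs.length_eq_zero_iff.mp hn)]
  | succ n ih =>
    obtain ⟨i, hi⟩ := cs.exists_leftDescent_of_ne_one (w := w * u⁻¹) fun h ↦ by
      simp [h] at hn
    rw [cs.isLeftDescent_iff, hn, ← mul_assoc] at hi
    have hle := cs.length_mul_le (cs.simple i * w * u⁻¹) u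
    rw [inv_mul_cancel_right] at hle
    have hwi : cs.IsLeftDescent w i := by
      rw [WkLe] at huw
      rw [IsLeftDescent]
      omega
    refine ih (cs.simple i * w) ?_ (h w hw i hwi) (by omega)
    rw [cs.isLeftDescent_iff] at hwi
    rw [WkLe] at huw ⊢
    omega

theorem exists_mem_DD_mul_of_isLeftDescent {K : Set B} {I0 : Set W}
    (hsub : I0 ⊆ (Subgroup.closure (cs.simple '' K) : Set W)) (hI0 : IsIdealWk cs I0)
    {d z : W} (hd : d ∈ DD cs K) (hz : z ∈ I0) {i : B} (h : cs.IsLeftDescent (d * z) i) :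
    ∃ d' ∈ DD cs K, ∃ z' ∈ I0, cs.simple i * (d * z) = d' * z' := by
  by_cases hdi : cs.IsLeftDescent d i
  · exact ⟨cs.simple i * d, simple_mul_mem_DD cs hd hdi, z, hz, (mul_assoc _ _ _).symm⟩
  obtain ⟨j, hj, hdj⟩ : ∃ j ∈ K, cs.IsRightDescent (cs.simple i * d) j := by
    by_contra! hcon
    have hlen := length_mul_of_mem_DD cs ((mem_DD_iff cs).mpr hcon) (hsub hz)
    rw [mul_assoc, cs.not_isLeftDescent_iff.mp hdi] at hlen
    rw [IsLeftDescent, length_mul_of_mem_DD cs hd (hsub hz)] at h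
    omega
  have hswap := cs.simple_mul_eq_mul_simple ((mem_DD_iff cs).mp hd j hj) hdj
  have hzj : cs.IsLeftDescent z j := by
    have hlen := length_mul_of_mem_DD cs hd
      (mul_mem (Subgroup.subset_closure ⟨j, hj, rfl⟩) (hsub hz))
    rw [← mul_assoc, ← hswap, mul_assoc] at hlen
    rw [IsLeftDescent, hlen, length_mul_of_mem_DD cs hd (hsub hz)] at h
    rw [IsLeftDescent]
    omega
  exact ⟨d, hd, cs.simple j * z, hI0 _ _ (wkLe_simple_mul cs hzj) hz,
    by rw [← mul_assoc, hswap, mul_assoc]⟩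

/-- `D_K · 𝔍₀` is an ideal of `(W, ≤_L)`. -/
theorem stmt15 (K : Set B) (I0 : Set W)
    (hsub : I0 ⊆ (Subgroup.closure (cs.simple '' K) : Set W))
    (hI0 : IsIdealWk cs I0) :
    IsIdealWk cs {w : W | ∃ d ∈ DD cs K, ∃ z ∈ I0, w = d * z} := by
  refine isIdealWk_of_simple_mul_mem cs fun w hw i hi ↦ ?_
  obtain ⟨d, hd, z, hz, rfl⟩ := hw
  exact exists_mem_DD_mul_of_isLeftDescent cs hsub hI0 hd hz hi

end WGI
end
end
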